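/- Let f(x,y) = sqrt((x+y−2)/(x+y)) − sqrt((x+y−2)/(x·y)). For all integers x, y with 2 ≤ x ≤ y and y ≥ 3, one has f(x,y) ≥ f(2,3) = sqrt(3/5) − 1/√2 > 0. -/
import Mathlib


noncomputable def f (x y : ℝ) : ℝ :=
  Real.sqrt ((x + y - 2) / (x + y)) - Real.sqrt ((x + y - 2) / (x * y))

theorem f_ge_f_two_three (x y : ℤ) (hx : 2 ≤ x) (hxy : x ≤ y) (hy : 3 ≤ y) :
    f x y ≥ f 2 3 ∧ f 2 3 = Real.sqrt (3 / 5) - 1 / Real.sqrt 2 ∧ (0 : ℝ) < f 2 3 := by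
  have ha : (2:ℝ) ≤ (x:ℝ) := by exact_mod_cast hx
  have hb : (3:ℝ) ≤ (y:ℝ) := by exact_mod_cast hy
  set a := (x:ℝ) with ha'
  set b := (y:ℝ) with hb'
  have h1 : (3/5:ℝ) ≤ (a+b-2)/(a+b) := by
    rw [div_le_div_iff₀ (by norm_num) (by linarith)]; nlinarith
  have h2 : (a+b-2)/(a*b) ≤ 1/2 := by
    rw [div_le_div_iff₀ (by nlinarith) (by norm_num)]; nlinarith
  have hf23 : f 2 3 = Real.sqrt (3/5) - Real.sqrt (1/2) := by
    unfold f; norm_num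
  have hfeq : f 2 3 = Real.sqrt (3/5) - 1 / Real.sqrt 2 := by
    rw [hf23, show (1/2:ℝ) = 2⁻¹ by norm_num, Real.sqrt_inv, inv_eq_one_div]
  refine ⟨?_, hfeq, ?_⟩
  · show f a b ≥ f 2 3
    unfold f
    have e : Real.sqrt ((2+3-2)/(2+3)) - Real.sqrt ((2+3-2)/(2*3)) = Real.sqrt (3/5) - Real.sqrt (1/2) := by norm_num
    rw [e]
    have s1 := Real.sqrt_le_sqrt h1
    have s2 := Real.sqrt_le_sqrt h2
    linarith
  · rw [hf23]
    have : Real.sqrt (1/2) < Real.sqrt (3/5) := by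
      apply Real.sqrt_lt_sqrt <;> norm_num
    linarith
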